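/- arXiv:2603.13489 — 6 statements merged into one kernel-verified Lean document; each statement's English description precedes it below -/
import Mathlib

section
/- Let R be a (not necessarily commutative) ring containing elements b and b† satisfying b·b† − b†·b = 1. Then for all natural numbers p and q, the commutator satisfies b^p·(b†)^q − (b†)^q·b^p = ∑_{s=1}^{min(p,q)} (s!·C(p,s)·C(q,s)) • ((b†)^{q−s}·b^{p−s}), where C(·,·) denotes the binomial coefficient and • denotes scalar multiplication by a natural number. -/
/-!
Left multiplication by `a` is right multiplication by `a` plus `ad a`, and these two commute, so
the binomial theorem gives `a ^ p * x = ∑ C(p, k) • ((ad a) ^ k x * a ^ (p - k))`. When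
`⁅a, c⁆ = 1`, `ad a` acts on powers of `c` as differentiation in `c`, so
`(ad a) ^ k (c ^ q) = q (q - 1) ⋯ (q - k + 1) • c ^ (q - k) = k! C(q, k) • c ^ (q - k)`.
-/

open Finset LieAlgebra

attribute [local instance] LieRing.ofAssociativeRing

section

variable {R : Type*} [Ring R]

theorem commute_ad_mulRight (a : R) : Commute (ad ℤ R a) (LinearMap.mulRight ℤ a) := by
  rw [ad_eq_lmul_left_sub_lmul_right]
  exact (LinearMap.commute_mulLeft_right a a).sub_left (Commute.refl _)

theorem pow_mul_eq_sum_choose_smul_ad_pow_mul (a x : R) (n : ℕ) :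
    a ^ n * x = ∑ k ∈ range (n + 1), n.choose k • ((ad ℤ R a ^ k) x * a ^ (n - k)) := by
  have hsplit : LinearMap.mulLeft ℤ a = ad ℤ R a + LinearMap.mulRight ℤ a := by
    rw [ad_eq_lmul_left_sub_lmul_right, Pi.sub_apply, sub_add_cancel]
  calc a ^ n * x = (LinearMap.mulLeft ℤ a ^ n) x := by rw [LinearMap.pow_mulLeft]; rfl
    _ = _ := by
      rw [hsplit, (commute_ad_mulRight a).add_pow, LinearMap.sum_apply]
      refine sum_congr rfl fun k _ => ?_
      rw [((commute_ad_mulRight a).pow_pow k (n - k)).eq, Module.End.mul_apply,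
        Module.End.natCast_apply, map_nsmul, Module.End.mul_apply, LinearMap.pow_mulRight]
      rfl

theorem Ring.lie_mul (a x y : R) : ⁅a, x * y⁆ = ⁅a, x⁆ * y + x * ⁅a, y⁆ := by
  simp only [Ring.lie_def]
  noncomm_ring

theorem lie_pow_eq_nsmul_pow_pred {a c : R} (h : ⁅a, c⁆ = 1) (n : ℕ) :
    ⁅a, c ^ n⁆ = n • c ^ (n - 1) := by
  induction n with
  | zero => simp [Ring.lie_def]
  | succ n ih =>
    rw [pow_succ, Ring.lie_mul, ih, h, mul_one, smul_mul_assoc, ← pow_succ, succ_nsmul]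
    cases n <;> simp

theorem ad_pow_apply_pow {a c : R} (h : ⁅a, c⁆ = 1) (k n : ℕ) :
    (ad ℤ R a ^ k) (c ^ n) = n.descFactorial k • c ^ (n - k) := by
  induction k with
  | zero => simp
  | succ k ih =>
    rw [pow_succ', Module.End.mul_apply, ih, map_nsmul, ad_apply, lie_pow_eq_nsmul_pow_pred h,
      smul_smul, Nat.descFactorial_succ, mul_comm, Nat.sub_sub]

theorem pow_mul_pow_eq_sum_of_lie_eq_one {a c : R} (h : ⁅a, c⁆ = 1) (p q : ℕ) :
    a ^ p * c ^ q = ∑ s ∈ range (p + 1),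
      (s.factorial * p.choose s * q.choose s) • (c ^ (q - s) * a ^ (p - s)) := by
  rw [pow_mul_eq_sum_choose_smul_ad_pow_mul]
  refine sum_congr rfl fun s _ => ?_
  rw [ad_pow_apply_pow h, smul_mul_assoc, smul_smul, Nat.descFactorial_eq_factorial_mul_choose,
    mul_left_comm, ← mul_assoc]

end

/-- Commutator identity `[b^p, (b†)^q]` for a canonical pair `b·b† − b†·b = 1`
in a (not necessarily commutative) ring. -/
theorem commutator_pow_of_ccr {R : Type*} [Ring R] (b bd : R)
    (h : b * bd - bd * b = 1) (p q : ℕ) :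
    b ^ p * bd ^ q - bd ^ q * b ^ p =
      ∑ s ∈ Finset.Icc 1 (min p q),
        (s.factorial * p.choose s * q.choose s) • (bd ^ (q - s) * b ^ (p - s)) := by
  rw [pow_mul_pow_eq_sum_of_lie_eq_one h, range_eq_Ico, sum_eq_sum_Ico_succ_bot p.succ_pos]
  simp only [Nat.factorial_zero, Nat.choose_zero_right, mul_one, one_smul, Nat.sub_zero,
    add_sub_cancel_left]
  refine (sum_subset (fun s hs => ?_) fun s hs hs' => ?_).symm
  · simp only [mem_Icc, mem_Ico] at hs ⊢
    omega
  · have hqs : q < s := by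
      simp only [mem_Icc, mem_Ico] at hs hs'
      omega
    rw [Nat.choose_eq_zero_of_lt hqs, mul_zero, zero_smul]
end

section
/- Let R be a (not necessarily commutative) ring containing elements b and b† satisfying b·b† − b†·b = 1, and define L(m,n) := (b†)^m·b^n for natural numbers m, n. Then for all natural numbers m, n, k, l, the commutator satisfies L(m,n)·L(k,l) − L(k,l)·L(m,n) = ∑_{s=1}^{min(n,k)} (s!·C(n,s)·C(k,s)) • L(m+k−s, n+l−s) − ∑_{s=1}^{min(l,m)} (s!·C(l,s)·C(m,s)) • L(k+m−s, l+n−s), i.e., the operators L(m,n) realize the W∞ algebra. -/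
/-!
Left multiplication by `b` is the sum of the commuting operators `ad b` and right multiplication
by `b`, so the binomial theorem gives `b ^ n * x = ∑ C(n,s) • (ad b)^s x * b ^ (n - s)`. Since
`⁅b, b†⁆ = 1`, `ad b` differentiates polynomials in `b†`, so `(ad b)^s (b† ^ k)` is
`k (k - 1) ⋯ (k - s + 1) • b† ^ (k - s)`. This normal-orders `L(m,n) L(k,l)` as
`L(m+k, n+l)` plus the terms with `s ≥ 1`, and the leading terms cancel in the commutator.
-/

open Finset LieAlgebra
open LinearMap (mulLeft mulRight)
open scoped Nat

theorem Finset.sum_range_succ_eq_add_sum_Icc_min {M : Type*} [AddCommMonoid M] (f : ℕ → M)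
    {n k : ℕ} (hf : ∀ s, k < s → f s = 0) :
    ∑ s ∈ range (n + 1), f s = f 0 + ∑ s ∈ Icc 1 (min n k), f s := by
  rw [range_eq_Ico, sum_eq_sum_Ico_succ_bot (Nat.add_one_pos n), zero_add,
    Ico_add_one_right_eq_Icc]
  congr 1
  refine (sum_subset (Icc_subset_Icc_right (min_le_left n k))
    fun s hs hs' => hf s ?_).symm
  simp only [mem_Icc] at hs hs'
  omega

section

attribute [local instance 100] LieRing.ofAssociativeRing

variable {R : Type*} [Ring R]

theorem pow_mul_eq_sum_ad_pow (b x : R) (n : ℕ) :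
    b ^ n * x = ∑ s ∈ range (n + 1), n.choose s • ((ad ℤ R b ^ s) x * b ^ (n - s)) := by
  have hsplit : mulLeft ℤ b = ad ℤ R b + mulRight ℤ b := by
    rw [ad_eq_lmul_left_sub_lmul_right, Pi.sub_apply, sub_add_cancel]
  have hcomm : Commute (ad ℤ R b) (mulRight ℤ b) := by
    rw [ad_eq_lmul_left_sub_lmul_right, Pi.sub_apply]
    exact (LinearMap.commute_mulLeft_right b b).sub_left (Commute.refl _)
  calc b ^ n * x = (mulLeft ℤ b ^ n) x := by
        rw [LinearMap.pow_mulLeft, LinearMap.mulLeft_apply]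
    _ = _ := by
      rw [hsplit, hcomm.add_pow, LinearMap.sum_apply]
      refine sum_congr rfl fun s _ => ?_
      rw [(hcomm.pow_pow s (n - s)).eq, Module.End.mul_apply, Module.End.mul_apply,
        Module.End.natCast_apply, map_nsmul, map_nsmul,
        LinearMap.pow_mulRight, LinearMap.mulRight_apply]

theorem lie_pow_succ_of_lie_eq_one {b a : R} (h : ⁅b, a⁆ = 1) (j : ℕ) :
    ⁅b, a ^ (j + 1)⁆ = (j + 1) • a ^ j := by
  induction j with
  | zero => simpa using h
  | succ j ih =>
    calc ⁅b, a ^ (j + 1 + 1)⁆ = ⁅b, a ^ (j + 1)⁆ * a + a ^ (j + 1) * ⁅b, a⁆ := by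
          simp only [Ring.lie_def, pow_succ a (j + 1)]; noncomm_ring
      _ = (j + 1 + 1) • a ^ (j + 1) := by
          rw [ih, h, smul_mul_assoc, ← pow_succ, mul_one, succ_nsmul _ (j + 1)]

theorem ad_pow_apply_pow_of_lie_eq_one {b a : R} (h : ⁅b, a⁆ = 1) (k s : ℕ) :
    (ad ℤ R b ^ s) (a ^ k) = k.descFactorial s • a ^ (k - s) := by
  induction s with
  | zero => simp
  | succ s ih =>
    rw [pow_succ', Module.End.mul_apply, ih, map_nsmul, ad_apply, Nat.descFactorial_succ,
      mul_nsmul]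
    obtain hks | hsk := le_or_gt k s
    · simp [Nat.sub_eq_zero_of_le hks, Ring.lie_def]
    · obtain ⟨j, hj⟩ : ∃ j, k - s = j + 1 := ⟨k - s - 1, by omega⟩
      rw [hj, lie_pow_succ_of_lie_eq_one h, show k - (s + 1) = j by omega, smul_comm]

theorem pow_mul_pow_of_lie_eq_one {b a : R} (h : ⁅b, a⁆ = 1) (n k : ℕ) :
    b ^ n * a ^ k = ∑ s ∈ range (n + 1),
      (n.choose s * k.descFactorial s) • (a ^ (k - s) * b ^ (n - s)) := by
  simp only [pow_mul_eq_sum_ad_pow, ad_pow_apply_pow_of_lie_eq_one h, smul_mul_assoc, mul_nsmul']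

theorem pow_mul_pow_mul_pow_mul_pow_of_lie_eq_one {b a : R} (h : ⁅b, a⁆ = 1) (m n k l : ℕ) :
    a ^ m * b ^ n * (a ^ k * b ^ l) = a ^ (m + k) * b ^ (n + l) +
      ∑ s ∈ Icc 1 (min n k),
        (s ! * n.choose s * k.choose s) • (a ^ (m + k - s) * b ^ (n + l - s)) := by
  set f : ℕ → R := fun s ↦
    (s ! * n.choose s * k.choose s) • (a ^ (m + k - s) * b ^ (n + l - s))
  have hf : ∀ s, k < s → f s = 0 := fun s hks ↦ by simp [f, Nat.choose_eq_zero_of_lt hks]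
  have hterm : ∀ s ∈ range (n + 1),
      a ^ m * ((n.choose s * k.descFactorial s) • (a ^ (k - s) * b ^ (n - s))) * b ^ l = f s := by
    intro s hs
    obtain hks | hsk := lt_or_ge k s
    · rw [hf s hks, Nat.descFactorial_eq_zero_iff_lt.2 hks, mul_zero, zero_smul, mul_zero,
        zero_mul]
    · have hsn : s ≤ n := Nat.lt_succ_iff.1 (mem_range.1 hs)
      rw [mul_smul_comm, smul_mul_assoc, ← mul_assoc, ← pow_add, mul_assoc, ← pow_add,
        Nat.descFactorial_eq_factorial_mul_choose, ← Nat.add_sub_assoc hsk,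
        ← Nat.sub_add_comm hsn, mul_left_comm, ← mul_assoc]
  calc a ^ m * b ^ n * (a ^ k * b ^ l) = a ^ m * (b ^ n * a ^ k) * b ^ l := by
        simp only [mul_assoc]
    _ = ∑ s ∈ range (n + 1), f s := by
        rw [pow_mul_pow_of_lie_eq_one h, mul_sum, sum_mul]
        exact sum_congr rfl hterm
    _ = _ := by
        rw [sum_range_succ_eq_add_sum_Icc_min f hf]
        simp [f]

end

/-- The operators `L(m,n) = (b†)^m b^n` built from a canonical pair
`b·b† − b†·b = 1` realize the `W∞` algebra. -/
theorem winfty_algebra {R : Type*} [Ring R] (b bd : R)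
    (h : b * bd - bd * b = 1)
    (L : ℕ → ℕ → R) (hL : ∀ m n : ℕ, L m n = bd ^ m * b ^ n)
    (m n k l : ℕ) :
    L m n * L k l - L k l * L m n =
      (∑ s ∈ Finset.Icc 1 (min n k),
        (s.factorial * n.choose s * k.choose s) • L (m + k - s) (n + l - s)) -
      ∑ s ∈ Finset.Icc 1 (min l m),
        (s.factorial * l.choose s * m.choose s) • L (k + m - s) (l + n - s) := by
  have hlie := (Ring.lie_def b bd).trans h
  simp only [hL]
  rw [pow_mul_pow_mul_pow_mul_pow_of_lie_eq_one hlie,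
    pow_mul_pow_mul_pow_mul_pow_of_lie_eq_one hlie, add_comm k m, add_comm l n]
  abel
end

section
/- Let ι be a finite type with decidable equality and let V := (Finset ι) →₀ ℂ be the free complex vector space with basis vectors e_S indexed by Finsets S of ι. Suppose that for every ordered pair (a,b) of distinct elements of ι we are given a ℂ-linear map C_{a,b} : V → V and scalars ε(a,b,S) ∈ ℂ such that: (i) if a ∈ S and b ∉ S then C_{a,b}(e_S) = ε(a,b,S) • e_{insert b (S.erase a)} with ε(a,b,S) ≠ 0, and (ii) C_{a,b}(e_S) = 0 otherwise. Then for every Finset S₀ of ι, the ℂ-linear span of the set of all vectors (C_{a₁,b₁} ∘ C_{a₂,b₂} ∘ ⋯ ∘ C_{a_r,b_r})(e_{S₀}) over all compositions of length 0 ≤ r ≤ |S₀| of such maps equals the ℂ-linear span of { e_T : T a Finset of ι with |T| = |S₀| }. -/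
private lemma foldr_comp_apply {ι : Type*} [DecidableEq ι]
    (C : ι → ι → ((Finset ι →₀ ℂ) →ₗ[ℂ] (Finset ι →₀ ℂ)))
    (l : List (ι × ι)) (h : (Finset ι →₀ ℂ) →ₗ[ℂ] (Finset ι →₀ ℂ)) (x : Finset ι →₀ ℂ) :
    (l.foldr (fun p f => C p.1 p.2 ∘ₗ f) h) x =
      (l.foldr (fun p f => C p.1 p.2 ∘ₗ f) LinearMap.id) (h x) := by
  induction l with
  | nil => simp
  | cons p l ih => simp [ih]

private lemma foldr_value {ι : Type*} [Fintype ι] [DecidableEq ι]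
    (C : ι → ι → ((Finset ι →₀ ℂ) →ₗ[ℂ] (Finset ι →₀ ℂ)))
    (ε : ι → ι → Finset ι → ℂ)
    (hmove : ∀ a b : ι, a ≠ b → ∀ S : Finset ι, a ∈ S → b ∉ S →
      C a b (Finsupp.single S 1) = ε a b S • Finsupp.single (insert b (S.erase a)) 1 ∧
      ε a b S ≠ 0)
    (hzero : ∀ a b : ι, a ≠ b → ∀ S : Finset ι, ¬(a ∈ S ∧ b ∉ S) →
      C a b (Finsupp.single S 1) = 0)
    (S₀ : Finset ι) (l : List (ι × ι)) (hne : ∀ p ∈ l, p.1 ≠ p.2) :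
    ∃ c : ℂ, ∃ T : Finset ι, T.card = S₀.card ∧
      (l.foldr (fun p f => C p.1 p.2 ∘ₗ f) LinearMap.id) (Finsupp.single S₀ 1)
        = c • Finsupp.single T 1 := by
  induction l with
  | nil => exact ⟨1, S₀, rfl, by simp⟩
  | cons p l ih =>
    obtain ⟨c, T, hT, hval⟩ := ih (fun q hq => hne q (List.mem_cons_of_mem _ hq))
    have hp : p.1 ≠ p.2 := hne p (List.mem_cons_self)
    by_cases hcase : p.1 ∈ T ∧ p.2 ∉ T
    · obtain ⟨hmv, _⟩ := hmove p.1 p.2 hp T hcase.1 hcase.2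
      refine ⟨c * ε p.1 p.2 T, insert p.2 (T.erase p.1), ?_, ?_⟩
      · rw [Finset.card_insert_of_notMem (fun h => hcase.2 (Finset.mem_of_mem_erase h)),
          Finset.card_erase_of_mem hcase.1, ← hT]
        have : 1 ≤ T.card := Finset.card_pos.mpr ⟨p.1, hcase.1⟩
        omega
      · simp only [List.foldr_cons, LinearMap.comp_apply, hval, map_smul, hmv, smul_smul]
    · refine ⟨0, T, hT, ?_⟩
      simp only [List.foldr_cons, LinearMap.comp_apply, hval, map_smul,
        hzero p.1 p.2 hp T hcase, smul_zero, zero_smul]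

private lemma reach {ι : Type*} [Fintype ι] [DecidableEq ι]
    (C : ι → ι → ((Finset ι →₀ ℂ) →ₗ[ℂ] (Finset ι →₀ ℂ)))
    (ε : ι → ι → Finset ι → ℂ)
    (hmove : ∀ a b : ι, a ≠ b → ∀ S : Finset ι, a ∈ S → b ∉ S →
      C a b (Finsupp.single S 1) = ε a b S • Finsupp.single (insert b (S.erase a)) 1 ∧
      ε a b S ≠ 0) :
    ∀ (d : ℕ) (S T : Finset ι), S.card = T.card → (S \ T).card = d →
      ∃ l : List (ι × ι), l.length = d ∧ (∀ p ∈ l, p.1 ≠ p.2) ∧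
        ∃ c : ℂ, c ≠ 0 ∧
          (l.foldr (fun p f => C p.1 p.2 ∘ₗ f) LinearMap.id) (Finsupp.single S 1)
            = c • Finsupp.single T 1 := by
  intro d
  induction d with
  | zero =>
    intro S T hcard hd
    have hsub : S ⊆ T := by
      rw [← Finset.sdiff_eq_empty_iff_subset]
      exact Finset.card_eq_zero.mp hd
    have : S = T := Finset.eq_of_subset_of_card_le hsub (le_of_eq hcard.symm)
    exact ⟨[], rfl, by simp, 1, one_ne_zero, by simp [this]⟩
  | succ d ih =>
    intro S T hcard hd
    have haS : (S \ T).Nonempty := Finset.card_pos.mp (by omega)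
    obtain ⟨a, ha⟩ := haS
    have hbT : (T \ S).Nonempty := by
      rw [← Finset.card_pos, Finset.card_sdiff_comm hcard.symm]
      omega
    obtain ⟨b, hb⟩ := hbT
    rw [Finset.mem_sdiff] at ha hb
    have hab : a ≠ b := fun h => hb.2 (h ▸ ha.1)
    set S₁ := insert b (S.erase a) with hS₁
    have hbnotin : b ∉ S.erase a := fun h => hb.2 (Finset.mem_of_mem_erase h)
    have hS₁card : S₁.card = T.card := by
      rw [hS₁, Finset.card_insert_of_notMem hbnotin, Finset.card_erase_of_mem ha.1, ← hcard]
      have : 1 ≤ S.card := Finset.card_pos.mpr ⟨a, ha.1⟩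
      omega
    have hsd : (S₁ \ T) = (S \ T).erase a := by
      ext x
      simp only [hS₁, Finset.mem_sdiff, Finset.mem_insert, Finset.mem_erase]
      constructor
      · rintro ⟨hx | ⟨hxa, hxS⟩, hxT⟩
        · exact absurd (hx ▸ hb.1) hxT
        · exact ⟨hxa, hxS, hxT⟩
      · rintro ⟨hxa, hxS, hxT⟩
        exact ⟨Or.inr ⟨hxa, hxS⟩, hxT⟩
    have hsdcard : (S₁ \ T).card = d := by
      rw [hsd, Finset.card_erase_of_mem (Finset.mem_sdiff.mpr ha), hd]; omega
    obtain ⟨l, hlen, hlne, c, hc, hval⟩ := ih S₁ T hS₁card hsdcard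
    obtain ⟨hmv, hε⟩ := hmove a b hab S ha.1 hb.2
    refine ⟨l ++ [(a, b)], by simp [hlen], ?_, ε a b S * c, mul_ne_zero hε hc, ?_⟩
    · intro p hp
      rcases List.mem_append.mp hp with h | h
      · exact hlne p h
      · simp at h; subst h; exact hab
    · rw [List.foldr_append]
      simp only [List.foldr_cons, List.foldr_nil]
      rw [foldr_comp_apply]
      simp only [LinearMap.comp_apply, LinearMap.id_apply, hmv, map_smul, ← hS₁, hval,
        smul_smul]

/-- Compositions of at most `|S₀|` abstract fermionic hopping operators `C_{a,b}`
(acting as `e_S ↦ ε(a,b,S) • e_{insert b (S.erase a)}` when `a` is occupied and `b`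
is empty, and as zero otherwise) applied to a Fock basis state `e_{S₀}` span the whole
fixed-particle-number sector `span { e_T : |T| = |S₀| }`. -/
theorem hopping_span {ι : Type*} [Fintype ι] [DecidableEq ι]
    (C : ι → ι → ((Finset ι →₀ ℂ) →ₗ[ℂ] (Finset ι →₀ ℂ)))
    (ε : ι → ι → Finset ι → ℂ)
    (hmove : ∀ a b : ι, a ≠ b → ∀ S : Finset ι, a ∈ S → b ∉ S →
      C a b (Finsupp.single S 1) = ε a b S • Finsupp.single (insert b (S.erase a)) 1 ∧
      ε a b S ≠ 0)
    (hzero : ∀ a b : ι, a ≠ b → ∀ S : Finset ι, ¬(a ∈ S ∧ b ∉ S) →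
      C a b (Finsupp.single S 1) = 0)
    (S₀ : Finset ι) :
    Submodule.span ℂ
      { v : Finset ι →₀ ℂ | ∃ l : List (ι × ι),
          l.length ≤ S₀.card ∧ (∀ p ∈ l, p.1 ≠ p.2) ∧
          v = (l.foldr (fun p f => C p.1 p.2 ∘ₗ f) LinearMap.id) (Finsupp.single S₀ 1) } =
    Submodule.span ℂ
      { v : Finset ι →₀ ℂ | ∃ T : Finset ι, T.card = S₀.card ∧ v = Finsupp.single T 1 } := by
  apply le_antisymm
  · rw [Submodule.span_le]
    rintro v ⟨l, -, hlne, rfl⟩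
    obtain ⟨c, T, hT, hval⟩ := foldr_value C ε hmove hzero S₀ l hlne
    rw [hval]
    exact Submodule.smul_mem _ _ (Submodule.subset_span ⟨T, hT, rfl⟩)
  · rw [Submodule.span_le]
    rintro v ⟨T, hT, rfl⟩
    obtain ⟨l, hlen, hlne, c, hc, hval⟩ :=
      reach C ε hmove ((S₀ \ T).card) S₀ T hT.symm rfl
    have hle : l.length ≤ S₀.card := by
      rw [hlen]
      exact Finset.card_le_card (Finset.sdiff_subset)
    have : Finsupp.single T 1 =
        c⁻¹ • (l.foldr (fun p f => C p.1 p.2 ∘ₗ f) LinearMap.id) (Finsupp.single S₀ 1) := by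
      rw [hval, smul_smul, inv_mul_cancel₀ hc, one_smul]
    rw [this]
    exact Submodule.smul_mem _ _ (Submodule.subset_span ⟨l, hle, hlne, rfl⟩)
end

section
/- Let N be a natural number and let V := (Finset (Fin N)) →₀ ℂ with basis vectors e_S. Suppose that for every ordered pair (a,b) of distinct elements of Fin N we are given ℂ-linear maps C_{a,b} : V → V and nonzero scalars ε(a,b,S) ∈ ℂ such that C_{a,b}(e_S) = ε(a,b,S) • e_{insert b (S.erase a)} when a ∈ S and b ∉ S, and C_{a,b}(e_S) = 0 otherwise. For each nonzero integer d, let Σ_d := { σ ∈ Fin N : σ + d is a valid index in Fin N } and suppose we are given an invertible complex matrix M^{(d)} indexed by Σ_d × Σ_d, and define the linear maps L^{(d)}_n := ∑_{σ ∈ Σ_d} M^{(d)}(n,σ) • C_{σ, σ+d} for n ∈ Σ_d. Then for every Finset S₀ of Fin N, the ℂ-linear span of all vectors (L^{(d₁)}_{n₁} ∘ ⋯ ∘ L^{(d_r)}_{n_r})(e_{S₀}) over all compositions of length 0 ≤ r ≤ |S₀| equals the ℂ-linear span of { e_T : |T| = |S₀| }. -/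
/-- For a nonzero integer shift `d`, `Sig N d` is the set of orbitals `σ ∈ Fin N`
such that `σ + d` is again a valid orbital index in `Fin N`. -/
abbrev Sig (N : ℕ) (d : ℤ) : Type :=
  {σ : Fin N // 0 ≤ ((σ : ℕ) : ℤ) + d ∧ ((σ : ℕ) : ℤ) + d < (N : ℤ)}

/-- The shifted orbital `σ + d ∈ Fin N` associated to `σ ∈ Sig N d`. -/
def shiftIdx {N : ℕ} {d : ℤ} (σ : Sig N d) : Fin N :=
  ⟨(((σ.1 : ℕ) : ℤ) + d).toNat, by have h := σ.2; omega⟩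

/-- Higher-spin deformation operators `L^{(d)}_n = ∑_σ M^{(d)}(n,σ) • C_{σ,σ+d}`,
obtained from the fermionic hopping operators by an invertible change of basis,
generate (by compositions of length at most `|S₀|` applied to `e_{S₀}`) the whole
fixed-particle-number sector `span { e_T : |T| = |S₀| }`. -/
theorem higher_spin_span (N : ℕ)
    (C : Fin N → Fin N → ((Finset (Fin N) →₀ ℂ) →ₗ[ℂ] (Finset (Fin N) →₀ ℂ)))
    (ε : Fin N → Fin N → Finset (Fin N) → ℂ)
    (hmove : ∀ a b : Fin N, a ≠ b → ∀ S : Finset (Fin N), a ∈ S → b ∉ S →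
      C a b (Finsupp.single S 1) = ε a b S • Finsupp.single (insert b (S.erase a)) 1 ∧
      ε a b S ≠ 0)
    (hzero : ∀ a b : Fin N, a ≠ b → ∀ S : Finset (Fin N), ¬(a ∈ S ∧ b ∉ S) →
      C a b (Finsupp.single S 1) = 0)
    (M : (d : ℤ) → Matrix (Sig N d) (Sig N d) ℂ)
    (hMinv : ∀ d : ℤ, d ≠ 0 → IsUnit (M d))
    (L : (d : ℤ) → Sig N d → ((Finset (Fin N) →₀ ℂ) →ₗ[ℂ] (Finset (Fin N) →₀ ℂ)))
    (hL : ∀ (d : ℤ) (n : Sig N d),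
      L d n = ∑ σ : Sig N d, M d n σ • C σ.1 (shiftIdx σ))
    (S₀ : Finset (Fin N)) :
    Submodule.span ℂ
      { v : Finset (Fin N) →₀ ℂ | ∃ l : List ((d : ℤ) × Sig N d),
          l.length ≤ S₀.card ∧ (∀ p ∈ l, p.1 ≠ 0) ∧
          v = (l.foldr (fun p f => L p.1 p.2 ∘ₗ f) LinearMap.id) (Finsupp.single S₀ 1) } =
    Submodule.span ℂ
      { v : Finset (Fin N) →₀ ℂ | ∃ T : Finset (Fin N),
          T.card = S₀.card ∧ v = Finsupp.single T 1 } := by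
  classical
  -- Generators by compositions of length ≤ r
  set G : ℕ → Set (Finset (Fin N) →₀ ℂ) := fun r =>
    { v : Finset (Fin N) →₀ ℂ | ∃ l : List ((d : ℤ) × Sig N d),
        l.length ≤ r ∧ (∀ p ∈ l, p.1 ≠ 0) ∧
        v = (l.foldr (fun p f => L p.1 p.2 ∘ₗ f) LinearMap.id) (Finsupp.single S₀ 1) }
    with hGdef
  set W : Submodule ℂ (Finset (Fin N) →₀ ℂ) := Submodule.span ℂ
      { v : Finset (Fin N) →₀ ℂ | ∃ T : Finset (Fin N),
          T.card = S₀.card ∧ v = Finsupp.single T 1 } with hWdef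
  -- if d ≠ 0 then σ ≠ shiftIdx σ
  have hne : ∀ (d : ℤ), d ≠ 0 → ∀ τ : Sig N d, τ.1 ≠ shiftIdx τ := by
    intro d hd τ h
    have h2 := τ.2
    have : (τ.1 : ℕ) = ((((τ.1 : ℕ) : ℤ) + d).toNat) := congrArg Fin.val h
    omega
  -- C preserves W
  have hCW : ∀ a b : Fin N, a ≠ b → ∀ v ∈ W, C a b v ∈ W := by
    intro a b hab v hv
    have hmap : Submodule.map (C a b) W ≤ W := by
      rw [hWdef, Submodule.map_span]
      apply Submodule.span_le.2
      rintro _ ⟨w, ⟨T, hT, rfl⟩, rfl⟩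
      by_cases h : a ∈ T ∧ b ∉ T
      · rw [(hmove a b hab T h.1 h.2).1]
        refine Submodule.smul_mem _ _ (Submodule.subset_span ⟨insert b (T.erase a), ?_, rfl⟩)
        have hbe : b ∉ T.erase a := fun hb => h.2 (Finset.mem_of_mem_erase hb)
        rw [Finset.card_insert_of_notMem hbe, Finset.card_erase_of_mem h.1]
        have : 0 < T.card := Finset.card_pos.2 ⟨a, h.1⟩
        omega
      · rw [hzero a b hab T h]
        exact (Submodule.span ℂ _).zero_mem
    exact hmap ⟨v, hv, rfl⟩
  -- L preserves W (for d ≠ 0)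
  have hLW : ∀ (d : ℤ), d ≠ 0 → ∀ (n : Sig N d), ∀ v ∈ W, L d n v ∈ W := by
    intro d hd n v hv
    rw [hL d n]
    simp only [LinearMap.sum_apply, LinearMap.smul_apply]
    exact Submodule.sum_mem _ fun τ _ =>
      Submodule.smul_mem _ _ (hCW τ.1 (shiftIdx τ) (hne d hd τ) v hv)
  -- LHS ≤ RHS
  have hfold : ∀ l : List ((d : ℤ) × Sig N d), (∀ p ∈ l, p.1 ≠ 0) →
      (l.foldr (fun p f => L p.1 p.2 ∘ₗ f) LinearMap.id) (Finsupp.single S₀ 1) ∈ W := by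
    intro l
    induction l with
    | nil => intro _; exact Submodule.subset_span ⟨S₀, rfl, rfl⟩
    | cons p l ih =>
      intro hp
      have h1 := ih fun q hq => hp q (List.mem_cons_of_mem _ hq)
      exact hLW p.1 (hp p (List.mem_cons_self)) p.2 _ h1
  -- C as combination of L's
  have hC_comb : ∀ (d : ℤ), d ≠ 0 → ∀ σ : Sig N d,
      C σ.1 (shiftIdx σ) = ∑ n : Sig N d, (M d)⁻¹ σ n • L d n := by
    intro d hd σ
    have hu := hMinv d hd
    have hinv : (M d)⁻¹ * M d = 1 :=
      Matrix.nonsing_inv_mul _ ((Matrix.isUnit_iff_isUnit_det _).1 hu)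
    have h1 : ∑ n : Sig N d, (M d)⁻¹ σ n • L d n
        = ∑ τ : Sig N d, ((M d)⁻¹ * M d) σ τ • C τ.1 (shiftIdx τ) := by
      simp only [hL, Finset.smul_sum, smul_smul, Matrix.mul_apply]
      rw [Finset.sum_comm]
      simp [Finset.sum_smul]
    rw [h1, hinv]
    simp [Matrix.one_apply]
  -- L maps span (G r) into span (G (r+1))
  have hLmap : ∀ (d : ℤ) (n : Sig N d) (r : ℕ), ∀ v ∈ Submodule.span ℂ (G r),
      d ≠ 0 → L d n v ∈ Submodule.span ℂ (G (r + 1)) := by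
    intro d n r v hv hd
    have hmap : Submodule.map (L d n) (Submodule.span ℂ (G r))
        ≤ Submodule.span ℂ (G (r + 1)) := by
      rw [Submodule.map_span]
      apply Submodule.span_le.2
      rintro _ ⟨w, ⟨l, hlen, hdz, rfl⟩, rfl⟩
      refine Submodule.subset_span ⟨⟨d, n⟩ :: l, by simpa using hlen, ?_, rfl⟩
      intro p hp
      rcases List.mem_cons.1 hp with h | h
      · subst h; exact hd
      · exact hdz p h
    exact hmap ⟨v, hv, rfl⟩
  -- C σ (σ+d) maps span (G r) into span (G (r+1))
  have hCmap : ∀ (d : ℤ), d ≠ 0 → ∀ (σ : Sig N d) (r : ℕ),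
      ∀ v ∈ Submodule.span ℂ (G r),
      C σ.1 (shiftIdx σ) v ∈ Submodule.span ℂ (G (r + 1)) := by
    intro d hd σ r v hv
    rw [hC_comb d hd σ]
    simp only [LinearMap.sum_apply, LinearMap.smul_apply]
    exact Submodule.sum_mem _ fun n _ =>
      Submodule.smul_mem _ _ (hLmap d n r v hv hd)
  -- reaching any T from S one move at a time
  have reach : ∀ m : ℕ, ∀ S T : Finset (Fin N), S.card = T.card → (T \ S).card = m →
      ∀ r : ℕ, Finsupp.single S 1 ∈ Submodule.span ℂ (G r) →
      Finsupp.single T 1 ∈ Submodule.span ℂ (G (r + m)) := by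
    intro m
    induction m with
    | zero =>
      intro S T hcard hdiff r hS
      have h1 : T \ S = ∅ := Finset.card_eq_zero.1 hdiff
      have h2 : T ⊆ S := by rwa [Finset.sdiff_eq_empty_iff_subset] at h1
      have : T = S := Finset.eq_of_subset_of_card_le h2 hcard.le
      rw [this]
      simpa using hS
    | succ m ih =>
      intro S T hcard hdiff r hS
      obtain ⟨b, hb⟩ : (T \ S).Nonempty := Finset.card_pos.1 (by omega)
      have hbT : b ∈ T := (Finset.mem_sdiff.1 hb).1
      have hbS : b ∉ S := (Finset.mem_sdiff.1 hb).2
      have hSTcard : (S \ T).card = (T \ S).card := by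
        have h1 := Finset.card_inter_add_card_sdiff S T
        have h2 := Finset.card_inter_add_card_sdiff T S
        rw [Finset.inter_comm] at h2
        omega
      obtain ⟨a, ha⟩ : (S \ T).Nonempty := Finset.card_pos.1 (by omega)
      have haS : a ∈ S := (Finset.mem_sdiff.1 ha).1
      have haT : a ∉ T := (Finset.mem_sdiff.1 ha).2
      have hab : a ≠ b := by rintro rfl; exact hbS haS
      have habn : (a : ℕ) ≠ (b : ℕ) := fun h => hab (Fin.ext h)
      have hbN : (b : ℕ) < N := b.isLt
      set d : ℤ := ((b : ℕ) : ℤ) - ((a : ℕ) : ℤ) with hd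
      have hd0 : d ≠ 0 := by omega
      have hσp : 0 ≤ ((a : ℕ) : ℤ) + d ∧ ((a : ℕ) : ℤ) + d < (N : ℤ) := by omega
      set σ : Sig N d := ⟨a, hσp⟩ with hσ
      have hshift : shiftIdx σ = b := by
        apply Fin.ext
        show ((((a : ℕ) : ℤ) + d).toNat) = (b : ℕ)
        omega
      set S' : Finset (Fin N) := insert b (S.erase a) with hS'def
      have hmv := hmove a b hab S haS hbS
      have hS' : Finsupp.single S' 1 ∈ Submodule.span ℂ (G (r + 1)) := by
        have hCv := hCmap d hd0 σ r _ hS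
        rw [hshift] at hCv
        rw [hmv.1] at hCv
        have h2 := Submodule.smul_mem _ (ε a b S)⁻¹ hCv
        rwa [smul_smul, inv_mul_cancel₀ hmv.2, one_smul] at h2
      have hbe : b ∉ S.erase a := fun h => hbS (Finset.mem_of_mem_erase h)
      have hS'card : S'.card = T.card := by
        rw [hS'def, Finset.card_insert_of_notMem hbe, Finset.card_erase_of_mem haS]
        have : 0 < S.card := Finset.card_pos.2 ⟨a, haS⟩
        omega
      have hdiff' : (T \ S').card = m := by
        have hset : T \ S' = (T \ S).erase b := by
          ext x
          simp only [hS'def, Finset.mem_sdiff, Finset.mem_erase, Finset.mem_insert,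
            Finset.mem_erase, not_or]
          constructor
          · rintro ⟨hxT, hxb, hx⟩
            refine ⟨hxb, hxT, fun hxS => ?_⟩
            rcases not_and_or.1 hx with h | h
            · exact h (fun hxa => haT (hxa ▸ hxT))
            · exact h hxS
          · rintro ⟨hxb, hxT, hxS⟩
            exact ⟨hxT, hxb, fun h => hxS h.2⟩
        rw [hset, Finset.card_erase_of_mem hb, hdiff]
        omega
      have hfin := ih S' T hS'card hdiff' (r + 1) hS'
      have : r + 1 + m = r + (m + 1) := by omega
      rwa [this] at hfin
  -- conclude
  apply le_antisymm
  · apply Submodule.span_le.2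
    rintro _ ⟨l, _, hdz, rfl⟩
    exact hfold l hdz
  · apply Submodule.span_le.2
    rintro _ ⟨T, hT, rfl⟩
    have hS0 : Finsupp.single S₀ 1 ∈ Submodule.span ℂ (G 0) :=
      Submodule.subset_span ⟨[], by simp, by simp, rfl⟩
    have h1 := reach (T \ S₀).card S₀ T hT.symm rfl 0 hS0
    have h2 : (T \ S₀).card ≤ S₀.card := by
      calc (T \ S₀).card ≤ T.card := Finset.card_le_card Finset.sdiff_subset
        _ = S₀.card := hT
    have hmono : Submodule.span ℂ (G (0 + (T \ S₀).card))
        ≤ Submodule.span ℂ (G S₀.card) := by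
      apply Submodule.span_mono
      rintro v ⟨l, hlen, hdz, rfl⟩
      exact ⟨l, by omega, hdz, rfl⟩
    exact hmono h1
end

section
/- Let s be a natural number with s ≥ 3. Then the sequence n ↦ ((n·s)! / (2n)!)^{1/(2n)} (factorials cast to ℝ, real division and real exponentiation) tends to +∞ as n → ∞. Consequently, any power series whose coefficients a_n satisfy |a_n| ≥ (n·s)!/(2n)! has zero radius of convergence. -/
open Filter

private lemma key_ratio (s : ℕ) (hs : 3 ≤ s) (n : ℕ) :
    ((n : ℝ)) ^ n ≤ (Nat.factorial (n * s) : ℝ) / (Nat.factorial (2 * n) : ℝ) := by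
  have hnat : Nat.factorial (2 * n) * n ^ n ≤ Nat.factorial (n * s) := by
    calc Nat.factorial (2 * n) * n ^ n
        ≤ Nat.factorial (2 * n) * (2 * n + 1) ^ n := by gcongr; omega
      _ ≤ Nat.factorial (2 * n + n) := Nat.factorial_mul_pow_le_factorial
      _ ≤ Nat.factorial (n * s) := Nat.factorial_le (by nlinarith)
  rw [le_div_iff₀ (by positivity)]
  calc ((n : ℝ)) ^ n * (Nat.factorial (2 * n) : ℝ)
      = ((Nat.factorial (2 * n) * n ^ n : ℕ) : ℝ) := by push_cast; ring
    _ ≤ (Nat.factorial (n * s) : ℝ) := by exact_mod_cast hnat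

/-- For `s ≥ 3`, `((n·s)!/(2n)!)^{1/(2n)} → +∞`; consequently any power series whose
coefficients dominate `(n·s)!/(2n)!` in absolute value has zero radius of convergence. -/
theorem factorial_ratio_root_tendsto_atTop (s : ℕ) (hs : 3 ≤ s) :
    Tendsto (fun n : ℕ =>
        ((Nat.factorial (n * s) : ℝ) / (Nat.factorial (2 * n) : ℝ)) ^ (1 / (2 * (n : ℝ))))
      atTop atTop ∧
    ∀ a : ℕ → ℝ,
      (∀ n : ℕ, (Nat.factorial (n * s) : ℝ) / (Nat.factorial (2 * n) : ℝ) ≤ |a n|) →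
      ∀ x : ℝ, x ≠ 0 → ¬ Summable (fun n : ℕ => a n * x ^ n) := by
  constructor
  · have h1 : ∀ᶠ n : ℕ in atTop,
        (n : ℝ) ^ (1 / 2 : ℝ) ≤
          ((Nat.factorial (n * s) : ℝ) / (Nat.factorial (2 * n) : ℝ)) ^ (1 / (2 * (n : ℝ))) := by
      filter_upwards [eventually_ge_atTop 1] with n hn
      have hn0 : (n : ℝ) ≠ 0 := by positivity
      have hE : (n : ℝ) * (1 / (2 * (n : ℝ))) = 1 / 2 := by field_simp
      calc (n : ℝ) ^ (1 / 2 : ℝ)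
          = ((n : ℝ) ^ (n : ℝ)) ^ (1 / (2 * (n : ℝ))) := by
            rw [← Real.rpow_mul (by positivity), hE]
        _ ≤ ((Nat.factorial (n * s) : ℝ) / (Nat.factorial (2 * n) : ℝ)) ^ (1 / (2 * (n : ℝ))) := by
            apply Real.rpow_le_rpow (by positivity) _ (by positivity)
            rw [Real.rpow_natCast]
            exact key_ratio s hs n
    refine tendsto_atTop_mono' atTop h1 ?_
    exact (tendsto_rpow_atTop (by norm_num)).comp tendsto_natCast_atTop_atTop
  · intro a ha x hx hsum
    have h0 := hsum.tendsto_atTop_zero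
    have habs : Tendsto (fun n => |a n * x ^ n|) atTop (nhds 0) := by
      simpa using h0.abs
    have hsmall : ∀ᶠ n : ℕ in atTop, |a n * x ^ n| < 1 :=
      habs.eventually (gt_mem_nhds one_pos)
    have hxpos : (0 : ℝ) < |x| := abs_pos.mpr hx
    have hbig : Tendsto (fun n : ℕ => (n : ℝ) * |x|) atTop atTop :=
      tendsto_natCast_atTop_atTop.atTop_mul_const hxpos
    have hge : ∀ᶠ n : ℕ in atTop, (1 : ℝ) ≤ (n : ℝ) * |x| := hbig.eventually_ge_atTop 1
    have : ∀ᶠ n : ℕ in atTop, (1 : ℝ) ≤ |a n * x ^ n| := by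
      filter_upwards [hge] with n hn
      calc (1 : ℝ) = 1 ^ n := (one_pow n).symm
        _ ≤ ((n : ℝ) * |x|) ^ n := pow_le_pow_left₀ one_pos.le hn n
        _ = (n : ℝ) ^ n * |x| ^ n := mul_pow _ _ _
        _ ≤ |a n| * |x| ^ n := by
            gcongr
            exact le_trans (key_ratio s hs n) (ha n)
        _ = |a n * x ^ n| := by rw [abs_mul, abs_pow]
    rcases (this.and hsmall).exists with ⟨n, h1, h2⟩
    linarith
end

section
/- Let s be a natural number with s ≥ 1. Then the sequence n ↦ ((n·s)! / (2n)!)^{1/(2n)} / n^{(s−2)/2} (factorials cast to ℝ, real division and real exponentiation) converges as n → ∞ to the constant s^{s/2} · exp(1 − s/2) / 2. In particular, ((n·s)!/(2n)!)^{1/(2n)} grows asymptotically like a constant times n^{(s−2)/2}. -/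
open Filter Real Stirling

lemma fact_eq_stirling (k : ℕ) (hk : 1 ≤ k) :
    ((Nat.factorial k : ℝ)) = stirlingSeq k * (Real.sqrt (2 * k) * ((k : ℝ) / Real.exp 1) ^ k) := by
  have hk' : (0 : ℝ) < k := by exact_mod_cast hk
  have hpos : 0 < Real.sqrt (2 * (k : ℝ)) * ((k : ℝ) / Real.exp 1) ^ k := by positivity
  rw [stirlingSeq]
  field_simp

lemma key_eq (s n : ℕ) (hs : 1 ≤ s) (hn : 1 ≤ n) :
    ((Nat.factorial (n * s) : ℝ) / (Nat.factorial (2 * n) : ℝ)) ^ (1 / (2 * (n : ℝ))) /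
        (n : ℝ) ^ (((s : ℝ) - 2) / 2)
      = (stirlingSeq (n * s) / stirlingSeq (2 * n)) ^ (1 / (2 * (n : ℝ)))
          * ((s : ℝ) / 2) ^ (1 / (2 * (n : ℝ)) * (1 / 2))
          * ((s : ℝ) ^ ((s : ℝ) / 2) * Real.exp (1 - (s : ℝ) / 2) / 2) := by
  have hn' : (0 : ℝ) < n := by exact_mod_cast hn
  have hs' : (0 : ℝ) < s := by exact_mod_cast hs
  have hns : 1 ≤ n * s := Nat.one_le_iff_ne_zero.mpr (by positivity)
  have h2n : 1 ≤ 2 * n := by omega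
  have hns' : (0 : ℝ) < (n * s : ℕ) := by exact_mod_cast hns
  have h2n' : (0 : ℝ) < (2 * n : ℕ) := by exact_mod_cast h2n
  have he : (0 : ℝ) < Real.exp 1 := Real.exp_pos 1
  obtain ⟨m, hm⟩ : ∃ m, n * s = m + 1 := ⟨n * s - 1, by omega⟩
  obtain ⟨m', hm'⟩ : ∃ m', 2 * n = m' + 1 := ⟨2 * n - 1, by omega⟩
  have hstns : 0 < stirlingSeq (n * s) := by rw [hm]; exact stirlingSeq'_pos m
  have hst2n : 0 < stirlingSeq (2 * n) := by rw [hm']; exact stirlingSeq'_pos m'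
  set t : ℝ := 1 / (2 * (n : ℝ)) with ht
  -- rewrite the factorial ratio
  have hR : ((Nat.factorial (n * s) : ℝ) / (Nat.factorial (2 * n) : ℝ))
      = (stirlingSeq (n * s) / stirlingSeq (2 * n))
        * ((Real.sqrt (2 * (n * s : ℕ)) / Real.sqrt (2 * (2 * n : ℕ)))
          * ((((n * s : ℕ) : ℝ) / Real.exp 1) ^ (n * s)
              / (((2 * n : ℕ) : ℝ) / Real.exp 1) ^ (2 * n))) := by
    rw [fact_eq_stirling _ hns, fact_eq_stirling _ h2n]
    have h1 : (0:ℝ) < Real.sqrt (2 * ((n * s : ℕ) : ℝ)) := Real.sqrt_pos.mpr (by positivity)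
    have h2 : (0:ℝ) < Real.sqrt (2 * ((2 * n : ℕ) : ℝ)) := Real.sqrt_pos.mpr (by positivity)
    have h3 : (0:ℝ) < (((n * s : ℕ) : ℝ) / Real.exp 1) ^ (n * s) := by positivity
    have h4 : (0:ℝ) < (((2 * n : ℕ) : ℝ) / Real.exp 1) ^ (2 * n) := by positivity
    field_simp
  rw [hR]
  have hA : (0:ℝ) ≤ stirlingSeq (n * s) / stirlingSeq (2 * n) := by positivity
  have hB : (0:ℝ) ≤ Real.sqrt (2 * (n * s : ℕ)) / Real.sqrt (2 * (2 * n : ℕ)) := by positivity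
  have hC : (0:ℝ) ≤ (((n * s : ℕ) : ℝ) / Real.exp 1) ^ (n * s)
      / (((2 * n : ℕ) : ℝ) / Real.exp 1) ^ (2 * n) := by positivity
  rw [Real.mul_rpow hA (by positivity), Real.mul_rpow hB hC]
  -- sqrt factor
  have hsqrt : Real.sqrt (2 * (n * s : ℕ)) / Real.sqrt (2 * (2 * n : ℕ))
      = ((s : ℝ) / 2) ^ ((1:ℝ)/2) := by
    rw [← Real.sqrt_div (by positivity), Real.sqrt_eq_rpow]
    congr 1
    push_cast
    field_simp
  have hsqrt' : (Real.sqrt (2 * (n * s : ℕ)) / Real.sqrt (2 * (2 * n : ℕ))) ^ t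
      = ((s : ℝ) / 2) ^ (t * (1/2)) := by
    rw [hsqrt, ← Real.rpow_mul (by positivity), mul_comm]
  -- power factor
  have hpow : ((((n * s : ℕ) : ℝ) / Real.exp 1) ^ (n * s)
        / (((2 * n : ℕ) : ℝ) / Real.exp 1) ^ (2 * n)) ^ t
      = (((n : ℝ) * s) / Real.exp 1) ^ ((s : ℝ) / 2) / ((2 * (n : ℝ)) / Real.exp 1) := by
    rw [Real.div_rpow (by positivity) (by positivity)]
    rw [← Real.rpow_natCast ((((n * s : ℕ) : ℝ) / Real.exp 1)) (n * s),
        ← Real.rpow_natCast ((((2 * n : ℕ) : ℝ) / Real.exp 1)) (2 * n),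
        ← Real.rpow_mul (by positivity), ← Real.rpow_mul (by positivity)]
    have e1 : ((n * s : ℕ) : ℝ) * t = (s : ℝ) / 2 := by
      rw [ht]; push_cast; field_simp
    have e2 : ((2 * n : ℕ) : ℝ) * t = 1 := by
      rw [ht]; push_cast; field_simp
    rw [e1, e2, Real.rpow_one]
    push_cast
    ring_nf
  rw [hsqrt', hpow]
  -- final arithmetic
  have hfin : (((n : ℝ) * s) / Real.exp 1) ^ ((s : ℝ) / 2) / ((2 * (n : ℝ)) / Real.exp 1)
        / (n : ℝ) ^ (((s : ℝ) - 2) / 2)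
      = (s : ℝ) ^ ((s : ℝ) / 2) * Real.exp (1 - (s : ℝ) / 2) / 2 := by
    rw [Real.div_rpow (by positivity) he.le, Real.mul_rpow hn'.le hs'.le]
    have hexp1 : Real.exp 1 ^ ((s : ℝ) / 2) = Real.exp ((s : ℝ) / 2) := Real.exp_one_rpow _
    have hnsub : (n : ℝ) ^ (((s : ℝ) - 2) / 2) = (n : ℝ) ^ ((s : ℝ) / 2) / (n : ℝ) := by
      have : ((s : ℝ) - 2) / 2 = (s : ℝ) / 2 - 1 := by ring
      rw [this, Real.rpow_sub hn', Real.rpow_one]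
    have hexps : Real.exp (1 - (s : ℝ) / 2) = Real.exp 1 / Real.exp ((s : ℝ) / 2) :=
      Real.exp_sub 1 _
    rw [hexp1, hnsub, hexps]
    have h5 : (0:ℝ) < Real.exp ((s : ℝ) / 2) := Real.exp_pos _
    have h6 : (0:ℝ) < (n : ℝ) ^ ((s : ℝ) / 2) := by positivity
    field_simp
    try ring
  rw [mul_assoc, mul_div_assoc, mul_div_assoc, hfin]
  try ring

/-- Stirling asymptotics: `((n·s)!/(2n)!)^{1/(2n)} / n^{(s−2)/2}` converges to
`s^{s/2}·exp(1 − s/2)/2` as `n → ∞`. -/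
theorem factorial_ratio_root_asymptotics (s : ℕ) (hs : 1 ≤ s) :
    Tendsto (fun n : ℕ =>
        ((Nat.factorial (n * s) : ℝ) / (Nat.factorial (2 * n) : ℝ)) ^ (1 / (2 * (n : ℝ))) /
          (n : ℝ) ^ (((s : ℝ) - 2) / 2))
      atTop
      (nhds ((s : ℝ) ^ ((s : ℝ) / 2) * Real.exp (1 - (s : ℝ) / 2) / 2)) := by
  have hs' : (0 : ℝ) < s := by exact_mod_cast hs
  have hmul : Tendsto (fun n : ℕ => n * s) atTop atTop :=
    tendsto_atTop_mono (fun n => Nat.le_mul_of_pos_right n (by omega)) tendsto_id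
  have h2 : Tendsto (fun n : ℕ => 2 * n) atTop atTop :=
    tendsto_atTop_mono (fun n => Nat.le_mul_of_pos_left n (by omega)) tendsto_id
  have h1 : Tendsto (fun n : ℕ => stirlingSeq (n * s)) atTop (nhds (Real.sqrt π)) :=
    tendsto_stirlingSeq_sqrt_pi.comp hmul
  have h2' : Tendsto (fun n : ℕ => stirlingSeq (2 * n)) atTop (nhds (Real.sqrt π)) :=
    tendsto_stirlingSeq_sqrt_pi.comp h2
  have hpi : Real.sqrt π ≠ 0 := ne_of_gt (Real.sqrt_pos.mpr Real.pi_pos)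
  have hAlim : Tendsto (fun n : ℕ => stirlingSeq (n * s) / stirlingSeq (2 * n)) atTop (nhds 1) := by
    have := h1.div h2' hpi
    rwa [div_self hpi] at this
  have htlim : Tendsto (fun n : ℕ => 1 / (2 * (n : ℝ))) atTop (nhds 0) := by
    have h : Tendsto (fun n : ℕ => 2 * (n : ℝ)) atTop atTop :=
      (tendsto_natCast_atTop_atTop).const_mul_atTop two_pos
    have := tendsto_inv_atTop_zero.comp h
    simpa [Function.comp_def, one_div, mul_inv_rev] using this
  have hA' : Tendsto (fun n : ℕ =>
      (stirlingSeq (n * s) / stirlingSeq (2 * n)) ^ (1 / (2 * (n : ℝ)))) atTop (nhds 1) := by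
    have := hAlim.rpow htlim (Or.inl one_ne_zero)
    simpa using this
  have hB' : Tendsto (fun n : ℕ => ((s : ℝ) / 2) ^ (1 / (2 * (n : ℝ)) * (1 / 2))) atTop
      (nhds 1) := by
    have := (tendsto_const_nhds (x := (s : ℝ) / 2) (f := atTop)).rpow
      (htlim.mul_const (1/2 : ℝ)) (Or.inl (by positivity))
    simpa using this
  have hprod : Tendsto (fun n : ℕ =>
      (stirlingSeq (n * s) / stirlingSeq (2 * n)) ^ (1 / (2 * (n : ℝ)))
        * ((s : ℝ) / 2) ^ (1 / (2 * (n : ℝ)) * (1 / 2))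
        * ((s : ℝ) ^ ((s : ℝ) / 2) * Real.exp (1 - (s : ℝ) / 2) / 2)) atTop
      (nhds ((s : ℝ) ^ ((s : ℝ) / 2) * Real.exp (1 - (s : ℝ) / 2) / 2)) := by
    have := (hA'.mul hB').mul_const ((s : ℝ) ^ ((s : ℝ) / 2) * Real.exp (1 - (s : ℝ) / 2) / 2)
    simpa using this
  refine hprod.congr' ?_
  filter_upwards [eventually_ge_atTop 1] with n hn
  exact (key_eq s n hs hn).symm
end
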